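/- arXiv:2306.12839 — 2 statements merged into one kernel-verified Lean document; each statement's English description precedes it below -/
import Mathlib

section
/- Let X and Y be Banach spaces, let T : X → Y be a bounded linear operator and let λ > 0. Let (R_n) be a sequence of bounded linear operators on Y such that ‖R_n‖ ≤ λ for all n and such that R_n y → 0 in Y for every y ∈ Y. Then the essential norm of T satisfies ‖T‖_e ≥ (1/λ) · limsup_n ‖R_n ∘ T‖. -/
open Filter Topology

/-!
If `K` is compact, the closure of the image of the unit ball under `K` is compact, and an
equibounded sequence of operators tending to zero pointwise is equicontinuous, hence tends to zero
uniformly on compact sets (Ascoli). Thus `‖Rₙ ∘ K‖ → 0`, and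
`‖Rₙ ∘ T‖ ≤ ‖Rₙ ∘ (T - K)‖ + ‖Rₙ ∘ K‖ ≤ λ ‖T - K‖ + o(1)`; take the infimum over `K`.
-/

/-- The essential norm of a bounded linear operator: its distance to the compact operators. -/
noncomputable def essNorm {𝕜 X Y : Type*} [NontriviallyNormedField 𝕜]
    [NormedAddCommGroup X] [NormedSpace 𝕜 X] [NormedAddCommGroup Y] [NormedSpace 𝕜 Y]
    (T : X →L[𝕜] Y) : ℝ :=
  sInf ((fun K : X →L[𝕜] Y => ‖T - K‖) '' {K | IsCompactOperator ⇑K})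

namespace ContinuousLinearMap

variable {ι 𝕜 X Y Z : Type*} {l : Filter ι}

theorem tendstoUniformlyOn_of_norm_le_of_tendsto_zero [NontriviallyNormedField 𝕜]
    [NormedAddCommGroup Y] [NormedSpace 𝕜 Y] [NormedAddCommGroup Z] [NormedSpace 𝕜 Z]
    (R : ι → Y →L[𝕜] Z) (C : ℝ) (hR : ∀ i, ‖R i‖ ≤ C)
    (hR0 : ∀ y, Tendsto (fun i => R i y) l (𝓝 0)) {S : Set Y} (hS : IsCompact S) :
    TendstoUniformlyOn (fun i => ⇑(R i)) 0 l S := by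
  have hequi : Equicontinuous fun i => ⇑(R i) :=
    ((NormedSpace.equicontinuous_TFAE R).out 5 1).mp (show ∃ C, ∀ i, ‖R i‖ ≤ C from ⟨C, hR⟩)
  have hcover : ⋃₀ {K : Set Y | IsCompact K} = Set.univ :=
    Set.sUnion_eq_univ_iff.mpr fun y => ⟨{y}, isCompact_singleton, rfl⟩
  have hcompact_open := (EquicontinuousOn.tendsto_uniformOnFun_iff_pi (fun _ hK => hK) hcover
    (fun K _ => hequi.equicontinuousOn K) l 0).mpr (tendsto_pi_nhds.mpr hR0)
  exact UniformOnFun.tendsto_iff_tendstoUniformlyOn.mp hcompact_open S hS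

variable [RCLike 𝕜] [NormedAddCommGroup X] [NormedSpace 𝕜 X] [NormedAddCommGroup Y]
  [NormedSpace 𝕜 Y] [NormedAddCommGroup Z] [NormedSpace 𝕜 Z]
  (R : ι → Y →L[𝕜] Z) (C : ℝ)

theorem tendsto_norm_comp_of_isCompactOperator (hR : ∀ i, ‖R i‖ ≤ C)
    (hR0 : ∀ y, Tendsto (fun i => R i y) l (𝓝 0)) (K : X →L[𝕜] Y) (hK : IsCompactOperator K) :
    Tendsto (fun i => ‖(R i).comp K‖) l (𝓝 0) := by
  have hS : IsCompact (closure (K '' Metric.closedBall 0 1)) :=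
    hK.isCompact_closure_image_closedBall 1
  have hunif := Metric.tendstoUniformlyOn_iff.mp
    (tendstoUniformlyOn_of_norm_le_of_tendsto_zero R C hR hR0 hS)
  refine Metric.tendsto_nhds.mpr fun ε hε => ?_
  filter_upwards [hunif (ε / 2) (half_pos hε)] with i hi
  have hnorm : ‖(R i).comp K‖ ≤ ε / 2 := by
    refine opNorm_le_of_unit_norm (half_pos hε).le fun x hx => ?_
    have hKx : K x ∈ closure (K '' Metric.closedBall 0 1) :=
      subset_closure ⟨x, mem_closedBall_zero_iff.mpr hx.le, rfl⟩
    simpa using (hi (K x) hKx).le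
  rw [Real.dist_eq, sub_zero, abs_of_nonneg (norm_nonneg _)]
  linarith

theorem limsup_norm_comp_le_mul_norm_sub [l.NeBot] (hR : ∀ i, ‖R i‖ ≤ C)
    (hR0 : ∀ y, Tendsto (fun i => R i y) l (𝓝 0)) (T K : X →L[𝕜] Y)
    (hK : IsCompactOperator K) :
    limsup (fun i => ‖(R i).comp T‖) l ≤ C * ‖T - K‖ := by
  have hbound : ∀ i, ‖(R i).comp T‖ ≤ C * ‖T - K‖ + ‖(R i).comp K‖ := fun i =>
    calc ‖(R i).comp T‖ = ‖(R i).comp (T - K) + (R i).comp K‖ := by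
          rw [← comp_add, sub_add_cancel]
      _ ≤ ‖R i‖ * ‖T - K‖ + ‖(R i).comp K‖ := norm_add_le_of_le ((R i).opNorm_comp_le _) le_rfl
      _ ≤ C * ‖T - K‖ + ‖(R i).comp K‖ := by gcongr; exact hR i
  have hlim : Tendsto (fun i => C * ‖T - K‖ + ‖(R i).comp K‖) l (𝓝 (C * ‖T - K‖)) := by
    simpa using tendsto_const_nhds.add (tendsto_norm_comp_of_isCompactOperator R C hR hR0 K hK)
  calc limsup (fun i => ‖(R i).comp T‖) l
      ≤ limsup (fun i => C * ‖T - K‖ + ‖(R i).comp K‖) l :=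
        limsup_le_limsup (.of_forall hbound) (isCoboundedUnder_le_of_le l fun _ => norm_nonneg _)
          hlim.isBoundedUnder_le
    _ = C * ‖T - K‖ := hlim.limsup_eq

end ContinuousLinearMap

theorem essNorm_ge_limsup_comp_general {X Y : Type*} [NormedAddCommGroup X] [NormedSpace ℝ X]
    [NormedAddCommGroup Y] [NormedSpace ℝ Y]
    (T : X →L[ℝ] Y) (lam : ℝ) (hlam : 0 < lam)
    (R : ℕ → Y →L[ℝ] Y) (hRnorm : ∀ n, ‖R n‖ ≤ lam)
    (hRzero : ∀ y : Y, Tendsto (fun n => R n y) atTop (nhds 0)) :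
    (1 / lam) * limsup (fun n => ‖(R n).comp T‖) atTop ≤ essNorm T := by
  refine le_csInf ⟨‖T - 0‖, 0, isCompactOperator_zero, rfl⟩ ?_
  rintro _ ⟨K, hK, rfl⟩
  rw [one_div, inv_mul_le_iff₀ hlam]
  exact ContinuousLinearMap.limsup_norm_comp_le_mul_norm_sub R lam hRnorm hRzero T K hK

/-- If `X, Y` are Banach spaces, `T : X → Y` is bounded linear, `λ > 0`, and `(Rₙ)` is a
sequence of bounded operators on `Y` with `‖Rₙ‖ ≤ λ` converging pointwise to `0`, then
`‖T‖ₑ ≥ (1/λ) · limsupₙ ‖Rₙ ∘ T‖`. -/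
theorem essNorm_ge_limsup_comp {X Y : Type*} [NormedAddCommGroup X] [NormedSpace ℝ X]
    [CompleteSpace X] [NormedAddCommGroup Y] [NormedSpace ℝ Y] [CompleteSpace Y]
    (T : X →L[ℝ] Y) (lam : ℝ) (hlam : 0 < lam)
    (R : ℕ → Y →L[ℝ] Y) (hRnorm : ∀ n, ‖R n‖ ≤ lam)
    (hRzero : ∀ y : Y, Tendsto (fun n => R n y) atTop (nhds 0)) :
    (1 / lam) * limsup (fun n => ‖(R n).comp T‖) atTop ≤ essNorm T :=
  essNorm_ge_limsup_comp_general T lam hlam R hRnorm hRzero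
end

section
/- Let (Ω₁, 𝒜, μ) and (Ω₂, ℬ, ν) be σ-finite measure spaces, let u : Ω₂ → ℂ be measurable and let φ : Ω₂ → Ω₁ be measurable and nonsingular (the pushforward of ν under φ is absolutely continuous with respect to μ). Fix q ≥ 1, define the measure μ_q on 𝒜 by μ_q(A) = ∫_{φ^{-1}(A)} |u|^q dν, and let F = (dμ_q/dμ)^{1/q} be the q-th root of its Radon–Nikodym derivative with respect to μ. Then for every f ∈ L^p(μ) one has ∫_{Ω₂} |u|^q |f ∘ φ|^q dν = ∫_{Ω₁} F^q |f|^q dμ, i.e. ‖u·(f∘φ)‖_{L^q(ν)} = ‖F f‖_{L^q(μ)}. -/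
/-!
Since `μ_q` is the pushforward of `|u|^q ν` under `φ`,
`∫ |u|^q |f ∘ φ|^q dν = ∫ |f|^q dμ_q = ∫ (dμ_q/dμ) |f|^q dμ`, the last step because `μ_q ≪ μ` by
nonsingularity; and `F^q = dμ_q/dμ`.
-/

open MeasureTheory ENNReal

theorem lintegral_mul_comp_eq_lintegral_rnDeriv_map_withDensity {α β : Type*}
    [MeasurableSpace α] [MeasurableSpace β] {μ : Measure α} {ν : Measure β}
    [SigmaFinite μ] [SFinite ν] {w : β → ℝ≥0∞} (hw : AEMeasurable w ν)
    {φ : β → α} (hφ : AEMeasurable φ ν) (hac : (ν.withDensity w).map φ ≪ μ)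
    {g : α → ℝ≥0∞} (hg : AEMeasurable g μ) :
    ∫⁻ x, w x * g (φ x) ∂ν = ∫⁻ y, ((ν.withDensity w).map φ).rnDeriv μ y * g y ∂μ := by
  have hφw : AEMeasurable φ (ν.withDensity w) := hφ.mono_ac (withDensity_absolutelyContinuous ν w)
  calc ∫⁻ x, w x * g (φ x) ∂ν
      = ∫⁻ x, g (φ x) ∂ν.withDensity w :=
        (lintegral_withDensity_eq_lintegral_mul₀' hw ((hg.mono_ac hac).comp_aemeasurable hφw)).symm
    _ = ∫⁻ y, g y ∂(ν.withDensity w).map φ := (lintegral_map' (hg.mono_ac hac) hφw).symm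
    _ = ∫⁻ y, ((ν.withDensity w).map φ).rnDeriv μ y * g y ∂μ := (lintegral_rnDeriv_mul hac hg).symm

theorem weightedComposition_change_of_variables_general {Ω₁ Ω₂ : Type*}
    [MeasurableSpace Ω₁] [MeasurableSpace Ω₂]
    (μ : Measure Ω₁) (ν : Measure Ω₂) [SigmaFinite μ] [SigmaFinite ν]
    (u : Ω₂ → ℂ) (hu : Measurable u)
    (φ : Ω₂ → Ω₁) (hφ : Measurable φ) (hns : Measure.map φ ν ≪ μ)
    (q : ℝ) (hq : 1 ≤ q) (p : ℝ)
    (f : Lp ℂ (ENNReal.ofReal p) μ) :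
    ∫⁻ x, (‖u x‖₊ : ℝ≥0∞) ^ q * (‖(f : Ω₁ → ℂ) (φ x)‖₊ : ℝ≥0∞) ^ q ∂ν
      = ∫⁻ y,
          (((Measure.map φ (ν.withDensity fun x => (‖u x‖₊ : ℝ≥0∞) ^ q)).rnDeriv μ y) ^ (1/q)) ^ q
            * (‖(f : Ω₁ → ℂ) y‖₊ : ℝ≥0∞) ^ q ∂μ := by
  have hq0 : q ≠ 0 := by linarith
  have hac : Measure.map φ (ν.withDensity fun x => (‖u x‖₊ : ℝ≥0∞) ^ q) ≪ μ :=
    ((withDensity_absolutelyContinuous ν _).map hφ).trans hns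
  simp_rw [one_div, ENNReal.rpow_inv_rpow hq0]
  exact lintegral_mul_comp_eq_lintegral_rnDeriv_map_withDensity
    (hu.nnnorm.coe_nnreal_ennreal.pow_const q).aemeasurable hφ.aemeasurable hac
    ((Lp.aestronglyMeasurable f).aemeasurable.nnnorm.coe_nnreal_ennreal.pow_const q)

/-- Change of variables for weighted composition operators: with
`μ_q(A) = ∫_{φ⁻¹(A)} |u|^q dν` and `F = (dμ_q/dμ)^{1/q}`, for every `f ∈ L^p(μ)` one has
`∫ |u|^q |f ∘ φ|^q dν = ∫ F^q |f|^q dμ`. -/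
theorem weightedComposition_change_of_variables {Ω₁ Ω₂ : Type*}
    [MeasurableSpace Ω₁] [MeasurableSpace Ω₂]
    (μ : Measure Ω₁) (ν : Measure Ω₂) [SigmaFinite μ] [SigmaFinite ν]
    (u : Ω₂ → ℂ) (hu : Measurable u)
    (φ : Ω₂ → Ω₁) (hφ : Measurable φ) (hns : Measure.map φ ν ≪ μ)
    (q : ℝ) (hq : 1 ≤ q) (p : ℝ) [Fact ((1:ℝ≥0∞) ≤ ENNReal.ofReal p)] (hp : 1 ≤ p)
    (f : Lp ℂ (ENNReal.ofReal p) μ) :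
    ∫⁻ x, (‖u x‖₊ : ℝ≥0∞) ^ q * (‖(f : Ω₁ → ℂ) (φ x)‖₊ : ℝ≥0∞) ^ q ∂ν
      = ∫⁻ y,
          (((Measure.map φ (ν.withDensity fun x => (‖u x‖₊ : ℝ≥0∞) ^ q)).rnDeriv μ y) ^ (1/q)) ^ q
            * (‖(f : Ω₁ → ℂ) y‖₊ : ℝ≥0∞) ^ q ∂μ :=
  weightedComposition_change_of_variables_general μ ν u hu φ hφ hns q hq p f
end
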